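/- Coordinate form of Prop. 4.17 (constancy of L along geodesics): Let L : Ω → ℝ be as in the context, nowhere zero on Ω, with metric spray G^L and metric nonlinear connection N^L. Let Z : Ω → ℝ^n be smooth and positively 2-homogeneous in y, let A = (A_i) : Ω → ℝ^n be smooth and positively 0-homogeneous in y, and set N_i^k := (N^L)_i^k + Z^k_{·i} + A_i y^k. Then the function t ↦ L(γ(t), γ̇(t)) is constant for every N-geodesic γ if and only if A_a(x,y) y^a = −2 g_{ab}(x,y) y^a Z^b(x,y) / L(x,y) for all (x,y) ∈ Ω. -/

import Mathlib

/-!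
Along an `N`-geodesic, `d/dt L(γ, γ̇) = γ̇^a δ_a L`, where `δ` is the horizontal derivative of `N`.
Since for every `p ∈ Ω` some `N`-geodesic has `(γ 0, γ̇ 0) = p` (Picard–Lindelöf), `L` is
constant along all `N`-geodesics iff `y^a δ_a L` vanishes on `Ω`.
For the metric connection `y^a δ_a L = 0`: by Euler's relation `y^a (N^L)_a^k = 2 G^k` and
`∂L/∂y^k = 2 g_{ka} y^a`, and contracting the spray with `g` turns `2 (∂L/∂y^k) G^k` into
`y^a ∂L/∂x^a`. The perturbation `Z^k_{·a} + A_a y^k` then contributes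
`-(∂L/∂y^k) (2 Z^k + A_a y^a y^k) = -4 g_{ab} y^a Z^b - 2 L A_a y^a`.
-/

open scoped BigOperators

noncomputable section

/-- A point of `ℝ^n × ℝ^n` (base coordinates `x`, fiber coordinates `y`). -/
abbrev Pt (n : ℕ) : Type := (Fin n → ℝ) × (Fin n → ℝ)

/-- Partial derivative `∂f/∂x^i` in the base variables. -/
def pdx {n : ℕ} (f : Pt n → ℝ) (i : Fin n) : Pt n → ℝ :=
  fun p => fderiv ℝ f p (Pi.single i 1, 0)

/-- Partial derivative `∂f/∂y^i` in the fiber variables. -/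
def pdy {n : ℕ} (f : Pt n → ℝ) (i : Fin n) : Pt n → ℝ :=
  fun p => fderiv ℝ f p (0, Pi.single i 1)

/-- Fundamental tensor `g_ij(x,y) = (1/2) ∂²L/∂y^i∂y^j`. -/
def gmet2 {n : ℕ} (L : Pt n → ℝ) (p : Pt n) : Matrix (Fin n) (Fin n) ℝ :=
  Matrix.of fun i j => (1 / 2) * pdy (pdy L i) j p

/-- Inverse fundamental tensor `g^{ij}`. -/
def ginv2 {n : ℕ} (L : Pt n → ℝ) (p : Pt n) : Matrix (Fin n) (Fin n) ℝ :=
  (gmet2 L p)⁻¹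

/-- Metric spray `(G^L)^i = (1/4) g^{ia} (2 ∂g_{ab}/∂x^c − ∂g_{bc}/∂x^a) y^b y^c`. -/
def spray {n : ℕ} (L : Pt n → ℝ) (p : Pt n) (i : Fin n) : ℝ :=
  (1 / 4) * ∑ a, ginv2 L p i a *
    ∑ b, ∑ c, (2 * pdx (fun q => gmet2 L q a b) c p - pdx (fun q => gmet2 L q b c) a p)
      * p.2 b * p.2 c

/-- Metric nonlinear connection `(N^L)_i^k = ∂(G^L)^k/∂y^i`. -/
def metricConn {n : ℕ} (L : Pt n → ℝ) (p : Pt n) (i k : Fin n) : ℝ :=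
  pdy (fun q => spray L q k) i p

/-- Horizontal derivative `δ_i f = ∂f/∂x^i − N_i^a ∂f/∂y^a`. -/
def deltaH {n : ℕ} (N : Pt n → Fin n → Fin n → ℝ) (i : Fin n) (f : Pt n → ℝ) (p : Pt n) : ℝ :=
  pdx f i p - ∑ a, N p i a * pdy f a p

/-- Ricci scalar `Ric[N] = y^b (δ_a N_b^a − δ_b N_a^a)` of a nonlinear connection. -/
def RicciScalar {n : ℕ} (N : Pt n → Fin n → Fin n → ℝ) (p : Pt n) : ℝ :=
  ∑ b, p.2 b *
    ((∑ a, deltaH N a (fun q => N q b a) p) - (∑ a, deltaH N b (fun q => N q a a) p))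

/-- `γ` is an `N`-geodesic on the interval `I`:
`γ` is `C²` on `I`, `(γ, γ̇)` stays in `Ω`, and `γ̈^k + N^k_a(γ,γ̇) γ̇^a = 0` on `I`. -/
def IsGeodesicOn {n : ℕ} (Ω : Set (Pt n)) (N : Pt n → Fin n → Fin n → ℝ)
    (γ : ℝ → Fin n → ℝ) (I : Set ℝ) : Prop :=
  ContDiffOn ℝ 2 γ I ∧ (∀ t ∈ I, (γ t, deriv γ t) ∈ Ω) ∧
    ∀ t ∈ I, ∀ k, deriv (fun s => deriv γ s k) t
      + ∑ a, N (γ t, deriv γ t) a k * deriv γ t a = 0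

open scoped ContDiff Matrix

variable {n : ℕ} {Ω : Set (Pt n)}

def IsConic (Ω : Set (Pt n)) : Prop :=
  ∀ p ∈ Ω, ∀ t : ℝ, 0 < t → (p.1, t • p.2) ∈ Ω

def IsHomogeneousOn (Ω : Set (Pt n)) (f : Pt n → ℝ) (α : ℕ) : Prop :=
  ∀ p ∈ Ω, ∀ t : ℝ, 0 < t → f (p.1, t • p.2) = t ^ α * f p

section MatrixInverse

variable {E ι : Type*} [NormedAddCommGroup E] [NormedSpace ℝ E] [Fintype ι] [DecidableEq ι]
  {s : Set E} {k : WithTop ℕ∞} {M : E → Matrix ι ι ℝ}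

theorem contDiffOn_det (hM : ∀ i j, ContDiffOn ℝ k (fun x => M x i j) s) :
    ContDiffOn ℝ k (fun x => (M x).det) s := by
  simp only [Matrix.det_apply, Units.smul_def, zsmul_eq_mul]
  exact ContDiffOn.sum fun σ _ => contDiffOn_const.mul (contDiffOn_prod fun i _ => hM (σ i) i)

theorem contDiffOn_adjugate_apply (hM : ∀ i j, ContDiffOn ℝ k (fun x => M x i j) s)
    (i j : ι) : ContDiffOn ℝ k (fun x => (M x).adjugate i j) s := by
  simp only [Matrix.adjugate_apply]
  refine contDiffOn_det fun a b => ?_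
  by_cases haj : a = j
  · subst haj
    simpa [Matrix.updateRow_apply] using contDiffOn_const
  · simpa [Matrix.updateRow_apply, haj] using hM a b

theorem contDiffOn_inv_apply (hM : ∀ i j, ContDiffOn ℝ k (fun x => M x i j) s)
    (hdet : ∀ x ∈ s, IsUnit (M x).det) (i j : ι) :
    ContDiffOn ℝ k (fun x => (M x)⁻¹ i j) s := by
  simp only [Matrix.inv_def, Matrix.smul_apply, Ring.inverse_eq_inv, smul_eq_mul]
  exact ((contDiffOn_det hM).inv fun x hx => (hdet x hx).ne_zero).mul
    (contDiffOn_adjugate_apply hM i j)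

end MatrixInverse

section PartialDerivatives

variable {f : Pt n → ℝ} {p : Pt n}

theorem fderiv_apply_eq_sum_pdx_add_sum_pdy (v : Pt n) :
    fderiv ℝ f p v = ∑ a, v.1 a * pdx f a p + ∑ a, v.2 a * pdy f a p := by
  have hv : v = ∑ a, v.1 a • ((Pi.single a 1, 0) : Pt n)
      + ∑ a, v.2 a • ((0, Pi.single a 1) : Pt n) := by
    ext j <;> simp [Prod.fst_sum, Prod.snd_sum, Finset.sum_apply, Pi.single_apply]
  conv_lhs => rw [hv]
  simp only [map_add, map_sum, map_smul, smul_eq_mul, pdx, pdy]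

theorem ContDiffOn.pdx (hf : ContDiffOn ℝ ∞ f Ω) (hΩ : IsOpen Ω) (i : Fin n) :
    ContDiffOn ℝ ∞ (pdx f i) Ω :=
  (hf.fderiv_of_isOpen hΩ (by simp)).clm_apply contDiffOn_const

theorem ContDiffOn.pdy (hf : ContDiffOn ℝ ∞ f Ω) (hΩ : IsOpen Ω) (i : Fin n) :
    ContDiffOn ℝ ∞ (pdy f i) Ω :=
  (hf.fderiv_of_isOpen hΩ (by simp)).clm_apply contDiffOn_const

theorem fderiv_fderiv_apply_comm (hf : ContDiffOn ℝ ∞ f Ω) (hΩ : IsOpen Ω) (hp : p ∈ Ω)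
    (v w : Pt n) :
    fderiv ℝ (fun q => fderiv ℝ f q v) p w = fderiv ℝ (fun q => fderiv ℝ f q w) p v := by
  have hf' : DifferentiableAt ℝ (fderiv ℝ f) p :=
    ((hf.contDiffAt (hΩ.mem_nhds hp)).fderiv_right (m := 1) (by norm_cast)).differentiableAt
      one_ne_zero
  have hsymm : IsSymmSndFDerivAt ℝ f p :=
    (hf.contDiffAt (hΩ.mem_nhds hp)).isSymmSndFDerivAt (by simp; norm_cast)
  simpa [fderiv_clm_apply hf' (differentiableAt_const _)] using hsymm w v

theorem pdx_pdy_comm (hf : ContDiffOn ℝ ∞ f Ω) (hΩ : IsOpen Ω) (hp : p ∈ Ω) (i c : Fin n) :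
    pdx (pdy f i) c p = pdy (pdx f c) i p :=
  fderiv_fderiv_apply_comm hf hΩ hp _ _

theorem pdy_pdy_comm (hf : ContDiffOn ℝ ∞ f Ω) (hΩ : IsOpen Ω) (hp : p ∈ Ω) (i j : Fin n) :
    pdy (pdy f i) j p = pdy (pdy f j) i p :=
  fderiv_fderiv_apply_comm hf hΩ hp _ _

theorem pdy_congr_of_eqOn {g : Pt n → ℝ} (hΩ : IsOpen Ω) (h : Set.EqOn f g Ω) (hp : p ∈ Ω)
    (i : Fin n) : pdy f i p = pdy g i p := by
  simp only [pdy, (Filter.eventuallyEq_of_mem (hΩ.mem_nhds hp) h).fderiv_eq]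

theorem pdx_const_mul (hf : DifferentiableAt ℝ f p) (r : ℝ) (i : Fin n) :
    pdx (fun q => r * f q) i p = r * pdx f i p := by
  simp [pdx, (hf.hasFDerivAt.const_mul r).fderiv]

end PartialDerivatives

section Homogeneity

variable {f : Pt n → ℝ} {α : ℕ} {p : Pt n}

theorem IsHomogeneousOn.sum_mul_pdy (hf : IsHomogeneousOn Ω f α) (hp : p ∈ Ω)
    (hfp : DifferentiableAt ℝ f p) : ∑ a, p.2 a * pdy f a p = α * f p := by
  have hray : HasDerivAt (fun t : ℝ => ((p.1, t • p.2) : Pt n)) (0, p.2) 1 :=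
    (hasDerivAt_const _ _).prodMk (by simpa using (hasDerivAt_id (1 : ℝ)).smul_const p.2)
  have hcomp : HasDerivAt (fun t : ℝ => f (p.1, t • p.2)) (fderiv ℝ f p (0, p.2)) 1 :=
    hfp.hasFDerivAt.comp_hasDerivAt_of_eq 1 hray (by simp)
  have hpow : HasDerivAt (fun t : ℝ => f (p.1, t • p.2)) (α * f p) 1 := by
    refine ((hasDerivAt_pow α 1).mul_const (f p)).congr_of_eventuallyEq ?_ |>.congr_deriv
      (by simp)
    filter_upwards [eventually_gt_nhds one_pos] with t ht using hf p hp t ht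
  simpa [fderiv_apply_eq_sum_pdx_add_sum_pdy] using hcomp.unique hpow

variable (hΩ : IsOpen Ω) (hΩc : IsConic Ω)

include hΩ hΩc in
theorem IsHomogeneousOn.fderiv_apply_smul (hf : IsHomogeneousOn Ω f α)
    (hfd : DifferentiableOn ℝ f Ω) (hp : p ∈ Ω) {t : ℝ} (ht : 0 < t) (v : Pt n) :
    fderiv ℝ f (p.1, t • p.2) (v.1, t • v.2) = t ^ α * fderiv ℝ f p v := by
  let m : Pt n →L[ℝ] Pt n :=
    (ContinuousLinearMap.fst ℝ _ _).prod (t • ContinuousLinearMap.snd ℝ _ _)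
  have hfm : HasFDerivAt (fun q => f (m q)) ((fderiv ℝ f (m p)).comp m) p :=
    (hfd.differentiableAt (hΩ.mem_nhds (hΩc p hp t ht))).hasFDerivAt.comp p m.hasFDerivAt
  have hscaled : HasFDerivAt (fun q => f (m q)) (t ^ α • fderiv ℝ f p) p := by
    refine ((hfd.differentiableAt (hΩ.mem_nhds hp)).hasFDerivAt.const_smul (t ^ α))
      |>.congr_of_eventuallyEq ?_
    filter_upwards [hΩ.mem_nhds hp] with q hq using hf q hq t ht
  simpa [m] using congrArg (· v) (hfm.unique hscaled)

include hΩ hΩc in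
theorem IsHomogeneousOn.pdx (hf : IsHomogeneousOn Ω f α) (hfd : DifferentiableOn ℝ f Ω)
    (i : Fin n) : IsHomogeneousOn Ω (pdx f i) α := fun p hp t ht => by
  simpa [_root_.pdx] using hf.fderiv_apply_smul hΩ hΩc hfd hp ht (Pi.single i 1, 0)

include hΩ hΩc in
theorem IsHomogeneousOn.pdy (hf : IsHomogeneousOn Ω f (α + 1)) (hfd : DifferentiableOn ℝ f Ω)
    (i : Fin n) : IsHomogeneousOn Ω (pdy f i) α := fun p hp t ht => by
  have h := hf.fderiv_apply_smul hΩ hΩc hfd hp ht (0, Pi.single i 1)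
  rw [show ((0 : Fin n → ℝ), t • Pi.single i (1 : ℝ)) = t • ((0, Pi.single i 1) : Pt n) by simp,
    map_smul, smul_eq_mul, pow_succ] at h
  change t * _root_.pdy f i _ = t ^ α * t * _root_.pdy f i p at h
  exact mul_left_cancel₀ ht.ne' (by linarith)

end Homogeneity

section FundamentalTensor

variable {L : Pt n → ℝ} {p : Pt n}

theorem contDiffOn_gmet2 (hL : ContDiffOn ℝ ∞ L Ω) (hΩ : IsOpen Ω) (a b : Fin n) :
    ContDiffOn ℝ ∞ (fun q => gmet2 L q a b) Ω :=
  contDiffOn_const.mul ((hL.pdy hΩ a).pdy hΩ b)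

theorem gmet2_isSymm (hL : ContDiffOn ℝ ∞ L Ω) (hΩ : IsOpen Ω) (hp : p ∈ Ω) :
    (gmet2 L p).IsSymm :=
  Matrix.IsSymm.ext fun a b => by simp [gmet2, pdy_pdy_comm hL hΩ hp]

theorem pdx_gmet2 (hL : ContDiffOn ℝ ∞ L Ω) (hΩ : IsOpen Ω) (hp : p ∈ Ω) (a b c : Fin n) :
    pdx (fun q => gmet2 L q a b) c p = gmet2 (pdx L c) p a b := by
  have hpdx_pdy : Set.EqOn (pdx (pdy L a) c) (pdy (pdx L c) a) Ω := fun q hq =>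
    pdx_pdy_comm hL hΩ hq a c
  simp only [gmet2, Matrix.of_apply]
  rw [pdx_const_mul (((hL.pdy hΩ a).pdy hΩ b).differentiableOn (by simp) p hp
      |>.differentiableAt (hΩ.mem_nhds hp)),
    pdx_pdy_comm (hL.pdy hΩ a) hΩ hp, pdy_congr_of_eqOn hΩ hpdx_pdy hp]

variable (hΩ : IsOpen Ω) (hΩc : IsConic Ω)

include hΩ hΩc in
theorem isHomogeneousOn_gmet2 (hLh : IsHomogeneousOn Ω L 2) (hL : ContDiffOn ℝ ∞ L Ω)
    (a b : Fin n) : IsHomogeneousOn Ω (fun q => gmet2 L q a b) 0 := fun p hp t ht => by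
  have h := ((hLh.pdy hΩ hΩc (hL.differentiableOn (by simp)) a).pdy hΩ hΩc
    ((hL.pdy hΩ a).differentiableOn (by simp)) b) p hp t ht
  simp [gmet2, h]

include hΩ hΩc in
theorem sum_gmet2_mul (hLh : IsHomogeneousOn Ω L 2) (hL : ContDiffOn ℝ ∞ L Ω) (hp : p ∈ Ω)
    (a : Fin n) : ∑ b, gmet2 L p a b * p.2 b = 1 / 2 * pdy L a p := by
  have h := (hLh.pdy hΩ hΩc (hL.differentiableOn (by simp)) a).sum_mul_pdy hp
    ((hL.pdy hΩ a).differentiableOn (by simp) p hp |>.differentiableAt (hΩ.mem_nhds hp))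
  simp only [Nat.cast_one, one_mul] at h
  rw [← h, Finset.mul_sum]
  exact Finset.sum_congr rfl fun b _ => by simp [gmet2]; ring

include hΩ hΩc in
theorem sum_sum_gmet2_mul_mul (hLh : IsHomogeneousOn Ω L 2) (hL : ContDiffOn ℝ ∞ L Ω)
    (hp : p ∈ Ω) : ∑ a, ∑ b, gmet2 L p a b * p.2 a * p.2 b = L p := by
  have h := hLh.sum_mul_pdy hp
    (hL.differentiableOn (by simp) p hp |>.differentiableAt (hΩ.mem_nhds hp))
  calc ∑ a, ∑ b, gmet2 L p a b * p.2 a * p.2 b = ∑ a, p.2 a * ∑ b, gmet2 L p a b * p.2 b := by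
        simp only [Finset.mul_sum]
        exact Finset.sum_congr rfl fun a _ => Finset.sum_congr rfl fun b _ => by ring
    _ = 1 / 2 * ∑ a, p.2 a * pdy L a p := by
        rw [Finset.mul_sum]
        exact Finset.sum_congr rfl fun a _ => by rw [sum_gmet2_mul hΩ hΩc hLh hL hp]; ring
    _ = L p := by rw [h]; push_cast; ring

include hΩ hΩc in
theorem sum_sum_pdx_gmet2_mul_mul (hLh : IsHomogeneousOn Ω L 2) (hL : ContDiffOn ℝ ∞ L Ω)
    (hp : p ∈ Ω) (a : Fin n) :
    ∑ b, ∑ c, pdx (fun q => gmet2 L q b c) a p * p.2 b * p.2 c = pdx L a p := by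
  simp only [pdx_gmet2 hL hΩ hp]
  exact sum_sum_gmet2_mul_mul hΩ hΩc (hLh.pdx hΩ hΩc (hL.differentiableOn (by simp)) a)
    (hL.pdx hΩ a) hp

end FundamentalTensor

theorem sum_mul_sum_sum_two_mul_sub (C : Fin n → Fin n → Fin n → ℝ) (y : Fin n → ℝ) :
    ∑ a, y a * ∑ b, ∑ c, (2 * C c a b - C a b c) * y b * y c
      = ∑ a, y a * ∑ b, ∑ c, C a b c * y b * y c := by
  have hcyc : ∑ a, ∑ b, ∑ c, y a * (C c a b * y b * y c)
      = ∑ a, ∑ b, ∑ c, y a * (C a b c * y b * y c) := by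
    rw [Finset.sum_congr rfl fun a _ => Finset.sum_comm, Finset.sum_comm]
    exact Finset.sum_congr rfl fun c _ => Finset.sum_congr rfl fun a _ =>
      Finset.sum_congr rfl fun b _ => by ring
  have hsplit : ∑ a, y a * ∑ b, ∑ c, (2 * C c a b - C a b c) * y b * y c
      = 2 * ∑ a, ∑ b, ∑ c, y a * (C c a b * y b * y c)
        - ∑ a, ∑ b, ∑ c, y a * (C a b c * y b * y c) := by
    simp only [Finset.mul_sum, ← Finset.sum_sub_distrib]
    exact Finset.sum_congr rfl fun a _ => Finset.sum_congr rfl fun b _ =>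
      Finset.sum_congr rfl fun c _ => by ring
  rw [hsplit, hcyc, two_mul, add_sub_cancel_right]
  simp only [Finset.mul_sum]

section Spray

variable {L : Pt n → ℝ} {p : Pt n}

theorem contDiffOn_spray (hL : ContDiffOn ℝ ∞ L Ω) (hΩ : IsOpen Ω)
    (hg : ∀ p ∈ Ω, IsUnit (gmet2 L p).det) (k : Fin n) :
    ContDiffOn ℝ ∞ (fun q => spray L q k) Ω := by
  have hginv (i j : Fin n) : ContDiffOn ℝ ∞ (fun q => ginv2 L q i j) Ω :=
    contDiffOn_inv_apply (contDiffOn_gmet2 hL hΩ) hg i j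
  have hdg (a b c : Fin n) : ContDiffOn ℝ ∞ (pdx (fun q => gmet2 L q a b) c) Ω :=
    (contDiffOn_gmet2 hL hΩ a b).pdx hΩ c
  unfold spray
  fun_prop

theorem contDiffOn_metricConn (hL : ContDiffOn ℝ ∞ L Ω) (hΩ : IsOpen Ω)
    (hg : ∀ p ∈ Ω, IsUnit (gmet2 L p).det) (i k : Fin n) :
    ContDiffOn ℝ ∞ (fun q => metricConn L q i k) Ω :=
  (contDiffOn_spray hL hΩ hg k).pdy hΩ i

variable (hΩ : IsOpen Ω) (hΩc : IsConic Ω)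

include hΩ hΩc in
theorem isHomogeneousOn_spray (hLh : IsHomogeneousOn Ω L 2) (hL : ContDiffOn ℝ ∞ L Ω)
    (k : Fin n) : IsHomogeneousOn Ω (fun q => spray L q k) 2 := fun p hp t ht => by
  have hg (a b : Fin n) := isHomogeneousOn_gmet2 hΩ hΩc hLh hL a b
  have hginv : ginv2 L (p.1, t • p.2) = ginv2 L p := by
    simp only [ginv2]
    congr 1
    ext a b
    simpa using hg a b p hp t ht
  have hdg (a b c : Fin n) := (hg a b).pdx hΩ hΩc
    ((contDiffOn_gmet2 hL hΩ a b).differentiableOn (by simp)) c p hp t ht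
  have hterm (a b c : Fin n) :
      (2 * pdx (fun q => gmet2 L q a b) c (p.1, t • p.2)
        - pdx (fun q => gmet2 L q b c) a (p.1, t • p.2)) * (t • p.2) b * (t • p.2) c
      = t ^ 2 * ((2 * pdx (fun q => gmet2 L q a b) c p
        - pdx (fun q => gmet2 L q b c) a p) * p.2 b * p.2 c) := by
    rw [hdg, hdg]
    simp only [Pi.smul_apply, smul_eq_mul]
    ring
  simp only [spray, hginv, hterm, ← Finset.mul_sum, mul_left_comm _ (t ^ 2)]

include hΩ hΩc in
theorem sum_mul_metricConn (hLh : IsHomogeneousOn Ω L 2) (hL : ContDiffOn ℝ ∞ L Ω)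
    (hg : ∀ p ∈ Ω, IsUnit (gmet2 L p).det) (hp : p ∈ Ω) (k : Fin n) :
    ∑ a, p.2 a * metricConn L p a k = 2 * spray L p k := by
  simpa [metricConn] using (isHomogeneousOn_spray hΩ hΩc hLh hL k).sum_mul_pdy hp
    ((contDiffOn_spray hL hΩ hg k).differentiableOn (by simp) p hp
      |>.differentiableAt (hΩ.mem_nhds hp))

include hΩ hΩc in
theorem sum_pdy_mul_spray (hLh : IsHomogeneousOn Ω L 2) (hL : ContDiffOn ℝ ∞ L Ω)
    (hg : ∀ p ∈ Ω, IsUnit (gmet2 L p).det) (hp : p ∈ Ω) :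
    ∑ k, pdy L k p * spray L p k = 1 / 2 * ∑ a, p.2 a * pdx L a p := by
  set T : Fin n → ℝ := fun a => ∑ b, ∑ c, (2 * pdx (fun q => gmet2 L q a b) c p
    - pdx (fun q => gmet2 L q b c) a p) * p.2 b * p.2 c
  have hpdy : (fun k => pdy L k p) = (2 : ℝ) • (gmet2 L p *ᵥ p.2) := funext fun k => by
    simp [Matrix.mulVec, dotProduct, sum_gmet2_mul hΩ hΩc hLh hL hp]
  have hspray : (fun k => spray L p k) = (1 / 4 : ℝ) • (ginv2 L p *ᵥ T) := rfl
  have hT : p.2 ⬝ᵥ T = ∑ a, p.2 a * pdx L a p := by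
    simp only [dotProduct, T,
      sum_mul_sum_sum_two_mul_sub (fun c a b => pdx (fun q => gmet2 L q a b) c p),
      sum_sum_pdx_gmet2_mul_mul hΩ hΩc hLh hL hp]
  calc ∑ k, pdy L k p * spray L p k
      = (fun k => pdy L k p) ⬝ᵥ (fun k => spray L p k) := rfl
    _ = 1 / 2 * ((p.2 ᵥ* gmet2 L p) ⬝ᵥ (ginv2 L p *ᵥ T)) := by
        rw [hpdy, hspray, ← Matrix.mulVec_transpose, (gmet2_isSymm hL hΩ hp).eq,
          smul_dotProduct, dotProduct_smul, smul_eq_mul, smul_eq_mul]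
        ring
    _ = 1 / 2 * ∑ a, p.2 a * pdx L a p := by
        rw [← Matrix.dotProduct_mulVec, ginv2, Matrix.mulVec_mulVec,
          Matrix.mul_nonsing_inv _ (hg p hp), Matrix.one_mulVec, hT]

end Spray

theorem sum_mul_deltaH (N : Pt n → Fin n → Fin n → ℝ) (f : Pt n → ℝ) (p : Pt n) :
    ∑ a, p.2 a * deltaH N a f p
      = ∑ a, p.2 a * pdx f a p - ∑ k, pdy f k p * ∑ a, p.2 a * N p a k := by
  simp only [deltaH, mul_sub, Finset.sum_sub_distrib, Finset.mul_sum]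
  congr 1
  rw [Finset.sum_comm]
  exact Finset.sum_congr rfl fun k _ => Finset.sum_congr rfl fun a _ => by ring

section DeltaH

variable {L : Pt n → ℝ} {p : Pt n} (hΩ : IsOpen Ω) (hΩc : IsConic Ω)

include hΩ hΩc in
theorem sum_mul_deltaH_metricConn (hLh : IsHomogeneousOn Ω L 2) (hL : ContDiffOn ℝ ∞ L Ω)
    (hg : ∀ p ∈ Ω, IsUnit (gmet2 L p).det) (hp : p ∈ Ω) :
    ∑ a, p.2 a * deltaH (metricConn L) a L p = 0 := by
  simp only [sum_mul_deltaH, sum_mul_metricConn hΩ hΩc hLh hL hg hp, mul_left_comm _ (2 : ℝ),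
    ← Finset.mul_sum, sum_pdy_mul_spray hΩ hΩc hLh hL hg hp]
  ring

include hΩ hΩc in
theorem sum_mul_deltaH_metricConn_add (hLh : IsHomogeneousOn Ω L 2) (hL : ContDiffOn ℝ ∞ L Ω)
    (hg : ∀ p ∈ Ω, IsUnit (gmet2 L p).det) {Z : Pt n → Fin n → ℝ} (hZd : DifferentiableOn ℝ Z Ω)
    (hZh : ∀ k, IsHomogeneousOn Ω (fun q => Z q k) 2) (A : Pt n → Fin n → ℝ) (hp : p ∈ Ω) :
    ∑ a, p.2 a * deltaH
        (fun q i k => metricConn L q i k + pdy (fun q => Z q k) i q + A q i * q.2 k) a L p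
      = -2 * (L p * ∑ a, A p a * p.2 a + 2 * ∑ a, ∑ b, gmet2 L p a b * p.2 a * Z p b) := by
  have hZ (k : Fin n) : ∑ a, p.2 a * pdy (fun q => Z q k) a p = 2 * Z p k := by
    simpa using (hZh k).sum_mul_pdy hp
      ((differentiableOn_pi.1 hZd k).differentiableAt (hΩ.mem_nhds hp))
  have hL2 : ∑ k, pdy L k p * p.2 k = 2 * L p := by
    simpa [mul_comm] using hLh.sum_mul_pdy hp
      (hL.differentiableOn (by simp) p hp |>.differentiableAt (hΩ.mem_nhds hp))
  have hgZ : ∑ a, ∑ b, gmet2 L p a b * p.2 a * Z p b = 1 / 2 * ∑ b, pdy L b p * Z p b := by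
    rw [Finset.sum_comm, Finset.mul_sum]
    refine Finset.sum_congr rfl fun b _ => ?_
    rw [← mul_assoc, ← sum_gmet2_mul hΩ hΩc hLh hL hp, Finset.sum_mul]
    refine Finset.sum_congr rfl fun a _ => ?_
    rw [(gmet2_isSymm hL hΩ hp).apply a b]
  have hmetric := sum_mul_deltaH_metricConn hΩ hΩc hLh hL hg hp
  have hN (k : Fin n) :
      ∑ a, p.2 a * (metricConn L p a k + pdy (fun q => Z q k) a p + A p a * p.2 k)
        = ∑ a, p.2 a * metricConn L p a k + (2 * Z p k + p.2 k * ∑ a, A p a * p.2 a) := by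
    rw [← hZ k, Finset.mul_sum, ← Finset.sum_add_distrib, ← Finset.sum_add_distrib]
    exact Finset.sum_congr rfl fun a _ => by ring
  have hZsum : ∑ k, pdy L k p * (2 * Z p k) = 2 * ∑ k, pdy L k p * Z p k := by
    rw [Finset.mul_sum]
    exact Finset.sum_congr rfl fun k _ => by ring
  have hAsum : ∑ k, pdy L k p * (p.2 k * ∑ a, A p a * p.2 a)
      = 2 * L p * ∑ a, A p a * p.2 a := by
    rw [← hL2, Finset.sum_mul]
    exact Finset.sum_congr rfl fun k _ => by ring
  rw [sum_mul_deltaH] at hmetric ⊢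
  rw [Finset.sum_congr rfl fun k _ => congrArg (pdy L k p * ·) (hN k)]
  simp only [mul_add, Finset.sum_add_distrib, hZsum, hAsum, hgZ]
  linarith

end DeltaH

section IntegralCurves

variable {E : Type*} [NormedAddCommGroup E] [NormedSpace ℝ E] {F : E → E} {U : Set E}

theorem exists_hasDerivAt_mem_of_contDiffOn [CompleteSpace E] (hU : IsOpen U)
    (hF : ContDiffOn ℝ 1 F U) {x : E} (hx : x ∈ U) :
    ∃ f : ℝ → E, f 0 = x ∧ ∃ r > 0, ∀ t ∈ Metric.ball 0 r, HasDerivAt f (F (f t)) t ∧ f t ∈ U := by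
  obtain ⟨f, hf0, ε, hε, hf⟩ := (hF.contDiffAt (hU.mem_nhds hx))
    |>.exists_forall_mem_closedBall_exists_eq_forall_mem_Ioo_hasDerivAt₀ 0
  have hIoo : Set.Ioo (0 - ε) (0 + ε) ∈ nhds (0 : ℝ) := Ioo_mem_nhds (by linarith) (by linarith)
  have hmem : ∀ᶠ t in nhds 0, f t ∈ U :=
    (hf 0 (mem_of_mem_nhds hIoo)).continuousAt.preimage_mem_nhds (hf0 ▸ hU.mem_nhds hx)
  obtain ⟨r, hr, h⟩ :=
    Metric.eventually_nhds_iff_ball.1 ((Filter.eventually_of_mem hIoo hf).and hmem)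
  exact ⟨f, hf0, r, hr, h⟩

theorem contDiffOn_two_of_hasDerivAt (hF : ContDiffOn ℝ 1 F U) {f : ℝ → E} {I : Set ℝ}
    (hI : IsOpen I) (hf : ∀ t ∈ I, HasDerivAt f (F (f t)) t) (hfU : Set.MapsTo f I U) :
    ContDiffOn ℝ 2 f I := by
  have hfd : DifferentiableOn ℝ f I := fun t ht => (hf t ht).differentiableAt.differentiableWithinAt
  have hderiv : Set.EqOn (F ∘ f) (deriv f) I := fun t ht => (hf t ht).deriv.symm
  have hf1 : ContDiffOn ℝ 1 f I := (contDiffOn_succ_iff_deriv_of_isOpen (n := 0) hI).2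
    ⟨hfd, by simp, contDiffOn_zero.2 ((hF.continuousOn.comp hfd.continuousOn hfU).congr
      hderiv.symm)⟩
  exact (contDiffOn_succ_iff_deriv_of_isOpen (n := 1) hI).2
    ⟨hfd, by simp, (hF.comp hf1 hfU).congr hderiv.symm⟩

end IntegralCurves

section Geodesics

variable {N : Pt n → Fin n → Fin n → ℝ} {γ : ℝ → Fin n → ℝ} {I : Set ℝ} {f : Pt n → ℝ}

theorem IsGeodesicOn.hasDerivAt_comp (hgeo : IsGeodesicOn Ω N γ I) (hI : IsOpen I)
    (hΩ : IsOpen Ω) (hf : DifferentiableOn ℝ f Ω) {t : ℝ} (ht : t ∈ I) :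
    HasDerivAt (fun s => f (γ s, deriv γ s))
      (∑ a, deriv γ t a * deltaH N a f (γ t, deriv γ t)) t := by
  obtain ⟨hγ, hγΩ, hγeq⟩ := hgeo
  have hvel : HasDerivAt γ (deriv γ t) t :=
    ((hγ.differentiableOn (by simp)).differentiableAt (hI.mem_nhds ht)).hasDerivAt
  have hacc : HasDerivAt (deriv γ) (deriv (deriv γ) t) t :=
    (((hγ.deriv_of_isOpen hI (m := 1) (by norm_num)).differentiableOn one_ne_zero).differentiableAt
      (hI.mem_nhds ht)).hasDerivAt
  have hgeodesic (k : Fin n) :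
      deriv (deriv γ) t k = -∑ a, N (γ t, deriv γ t) a k * deriv γ t a := by
    rw [← (hasDerivAt_pi.1 hacc k).deriv]
    linarith [hγeq t ht k]
  refine ((hf.differentiableAt (hΩ.mem_nhds (hγΩ t ht))).hasFDerivAt.comp_hasDerivAt t
    (hvel.prodMk hacc)).congr_deriv ?_
  rw [fderiv_apply_eq_sum_pdx_add_sum_pdy]
  refine ((sum_mul_deltaH N f (γ t, deriv γ t)).trans ?_).symm
  simp only [hgeodesic, neg_mul, Finset.sum_neg_distrib, mul_comm (pdy f _ _),
    mul_comm (N _ _ _), ← sub_eq_add_neg]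

theorem exists_isGeodesicOn_ball (hΩ : IsOpen Ω) (hN : ∀ i k, ContDiffOn ℝ 1 (fun p => N p i k) Ω)
    {p : Pt n} (hp : p ∈ Ω) :
    ∃ γ : ℝ → Fin n → ℝ, ∃ r > 0, IsGeodesicOn Ω N γ (Metric.ball 0 r) ∧
      γ 0 = p.1 ∧ deriv γ 0 = p.2 := by
  let F : Pt n → Pt n := fun q => (q.2, fun k => -∑ a, N q a k * q.2 a)
  have hF : ContDiffOn ℝ 1 F Ω := by fun_prop
  obtain ⟨c, hc0, r, hr, hc⟩ := exists_hasDerivAt_mem_of_contDiffOn hΩ hF hp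
  have hpos (t : ℝ) (ht : t ∈ Metric.ball 0 r) : HasDerivAt (fun s => (c s).1) (c t).2 t :=
    (ContinuousLinearMap.fst ℝ (Fin n → ℝ) (Fin n → ℝ)).hasFDerivAt.comp_hasDerivAt t (hc t ht).1
  have hacc (t : ℝ) (ht : t ∈ Metric.ball 0 r) (k : Fin n) :
      HasDerivAt (fun s => (c s).2 k) (-∑ a, N (c t) a k * (c t).2 a) t :=
    hasDerivAt_pi.1 ((ContinuousLinearMap.snd ℝ (Fin n → ℝ) (Fin n → ℝ)).hasFDerivAt
      |>.comp_hasDerivAt t (hc t ht).1) k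
  have hvel (t : ℝ) (ht : t ∈ Metric.ball 0 r) : deriv (fun s => (c s).1) t = (c t).2 :=
    (hpos t ht).deriv
  refine ⟨fun s => (c s).1, r, hr, ⟨?_, fun t ht => ?_, fun t ht k => ?_⟩, by simp [hc0], ?_⟩
  · exact contDiff_fst.comp_contDiffOn
      (contDiffOn_two_of_hasDerivAt hF Metric.isOpen_ball (fun t ht => (hc t ht).1)
        fun t ht => (hc t ht).2)
  · simpa [hvel t ht] using (hc t ht).2
  · have hev : (fun s => deriv (fun s => (c s).1) s k) =ᶠ[nhds t] fun s => (c s).2 k :=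
      Filter.eventually_of_mem (Metric.isOpen_ball.mem_nhds ht) fun s hs => congrFun (hvel s hs) k
    rw [hev.deriv_eq, (hacc t ht k).deriv, hvel t ht]
    simp
  · simp [hvel 0 (Metric.mem_ball_self hr), hc0]

theorem forall_const_along_isGeodesicOn_iff (hΩ : IsOpen Ω) (hf : DifferentiableOn ℝ f Ω)
    (hN : ∀ i k, ContDiffOn ℝ 1 (fun p => N p i k) Ω) :
    (∀ (γ : ℝ → Fin n → ℝ) (I : Set ℝ), IsOpen I → Convex ℝ I → IsGeodesicOn Ω N γ I →
        ∀ s ∈ I, ∀ t ∈ I, f (γ s, deriv γ s) = f (γ t, deriv γ t))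
      ↔ ∀ p ∈ Ω, ∑ a, p.2 a * deltaH N a f p = 0 := by
  constructor
  · intro hconst p hp
    obtain ⟨γ, r, hr, hgeo, hγ0, hγ'0⟩ := exists_isGeodesicOn_ball hΩ hN hp
    have h0 : (0 : ℝ) ∈ Metric.ball 0 r := Metric.mem_ball_self hr
    have hzero : HasDerivAt (fun s => f (γ s, deriv γ s)) 0 0 :=
      (hasDerivAt_const 0 (f (γ 0, deriv γ 0))).congr_of_eventuallyEq <|
        Filter.eventually_of_mem (Metric.isOpen_ball.mem_nhds h0) fun s hs =>
          hconst γ _ Metric.isOpen_ball (convex_ball 0 r) hgeo s hs 0 h0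
    simpa [hγ0, hγ'0] using (hgeo.hasDerivAt_comp Metric.isOpen_ball hΩ hf h0).unique hzero
  · intro hzero γ I hI hIc hgeo s hs t ht
    have hderiv (u : ℝ) (hu : u ∈ I) : HasDerivAt (fun s => f (γ s, deriv γ s)) 0 u := by
      simpa [hzero _ (hgeo.2.1 u hu)] using hgeo.hasDerivAt_comp hI hΩ hf hu
    exact hI.is_const_of_deriv_eq_zero hIc.isPreconnected
      (fun u hu => (hderiv u hu).differentiableAt.differentiableWithinAt)
      (fun u hu => (hderiv u hu).deriv) hs ht

end Geodesics

theorem L_constant_along_geodesics_iff_general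
    {n : ℕ} (Ω : Set (Pt n)) (hΩopen : IsOpen Ω)
    (hΩconic : ∀ p ∈ Ω, ∀ t : ℝ, 0 < t → (p.1, t • p.2) ∈ Ω)
    (L : Pt n → ℝ)
    (hLsmooth : ContDiffOn ℝ (⊤ : ℕ∞) L Ω)
    (hLhom : ∀ p ∈ Ω, ∀ t : ℝ, 0 < t → L (p.1, t • p.2) = t ^ 2 * L p)
    (hLnz : ∀ p ∈ Ω, L p ≠ 0)
    (hginv : ∀ p ∈ Ω, IsUnit (gmet2 L p).det)
    (Z : Pt n → Fin n → ℝ)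
    (hZsmooth : ContDiffOn ℝ (⊤ : ℕ∞) Z Ω)
    (hZhom : ∀ p ∈ Ω, ∀ t : ℝ, 0 < t → Z (p.1, t • p.2) = t ^ 2 • Z p)
    (A : Pt n → Fin n → ℝ)
    (hAsmooth : ContDiffOn ℝ (⊤ : ℕ∞) A Ω) :
    (∀ (γ : ℝ → Fin n → ℝ) (I : Set ℝ), IsOpen I → Convex ℝ I →
        IsGeodesicOn Ω
          (fun p i k => metricConn L p i k + pdy (fun q => Z q k) i p + A p i * p.2 k)
          γ I →
        ∀ s ∈ I, ∀ t ∈ I, L (γ s, deriv γ s) = L (γ t, deriv γ t))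
      ↔ (∀ p ∈ Ω, ∑ a, A p a * p.2 a
          = -2 * (∑ a, ∑ b, gmet2 L p a b * p.2 a * Z p b) / L p) := by
  have hN (i k : Fin n) : ContDiffOn ℝ 1
      (fun p => metricConn L p i k + pdy (fun q => Z q k) i p + A p i * p.2 k) Ω := by
    have hZk : ContDiffOn ℝ ∞ (pdy (fun q => Z q k) i) Ω :=
      (contDiffOn_pi.1 hZsmooth k).pdy hΩopen i
    have hAi : ContDiffOn ℝ ∞ (fun p => A p i) Ω := contDiffOn_pi.1 hAsmooth i
    have hNL : ContDiffOn ℝ ∞ (fun p => metricConn L p i k) Ω :=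
      contDiffOn_metricConn hLsmooth hΩopen hginv i k
    exact ContDiffOn.of_le (n := ∞) (by fun_prop) (by norm_cast)
  have hZkhom (k : Fin n) : IsHomogeneousOn Ω (fun q => Z q k) 2 := fun p hp t ht => by
    simp [hZhom p hp t ht]
  rw [forall_const_along_isGeodesicOn_iff hΩopen (hLsmooth.differentiableOn (by simp)) hN]
  refine forall₂_congr fun p hp => ?_
  rw [sum_mul_deltaH_metricConn_add hΩopen hΩconic hLhom hLsmooth hginv
    (hZsmooth.differentiableOn (by simp)) hZkhom A hp, eq_div_iff (hLnz p hp)]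
  constructor <;> intro h <;> linarith

/-- **Coordinate form of Prop. 4.17** (constancy of `L` along geodesics). For
`N_i^k := (N^L)_i^k + Z^k_{·i} + A_i y^k`, the function `t ↦ L(γ(t), γ̇(t))` is constant
along every `N`-geodesic `γ` iff `A_a y^a = −2 g_{ab} y^a Z^b / L` holds on `Ω`. -/
theorem L_constant_along_geodesics_iff
    {n : ℕ} (Ω : Set (Pt n)) (hΩopen : IsOpen Ω)
    (hΩconic : ∀ p ∈ Ω, ∀ t : ℝ, 0 < t → (p.1, t • p.2) ∈ Ω)
    (hΩnz : ∀ p ∈ Ω, p.2 ≠ 0)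
    (L : Pt n → ℝ)
    (hLsmooth : ContDiffOn ℝ (⊤ : ℕ∞) L Ω)
    (hLhom : ∀ p ∈ Ω, ∀ t : ℝ, 0 < t → L (p.1, t • p.2) = t ^ 2 * L p)
    (hLnz : ∀ p ∈ Ω, L p ≠ 0)
    (hginv : ∀ p ∈ Ω, IsUnit (gmet2 L p).det)
    (Z : Pt n → Fin n → ℝ)
    (hZsmooth : ContDiffOn ℝ (⊤ : ℕ∞) Z Ω)
    (hZhom : ∀ p ∈ Ω, ∀ t : ℝ, 0 < t → Z (p.1, t • p.2) = t ^ 2 • Z p)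
    (A : Pt n → Fin n → ℝ)
    (hAsmooth : ContDiffOn ℝ (⊤ : ℕ∞) A Ω)
    (hAhom : ∀ p ∈ Ω, ∀ t : ℝ, 0 < t → A (p.1, t • p.2) = A p) :
    (∀ (γ : ℝ → Fin n → ℝ) (I : Set ℝ), IsOpen I → Convex ℝ I →
        IsGeodesicOn Ω
          (fun p i k => metricConn L p i k + pdy (fun q => Z q k) i p + A p i * p.2 k)
          γ I →
        ∀ s ∈ I, ∀ t ∈ I, L (γ s, deriv γ s) = L (γ t, deriv γ t))
      ↔ (∀ p ∈ Ω, ∑ a, A p a * p.2 a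
          = -2 * (∑ a, ∑ b, gmet2 L p a b * p.2 a * Z p b) / L p) :=
  L_constant_along_geodesics_iff_general Ω hΩopen hΩconic L hLsmooth hLhom hLnz hginv Z hZsmooth
    hZhom A hAsmooth
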